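/- With M := V₁ ⊗_E V₂: (a) the right E-scalar action together with (x⊗y)·𝐣 := (x·𝐣₁)⊗(y·𝐣₂) is well defined and makes M a right B-module, where B = E ⊕ E𝐣 is the quaternion F-algebra with 𝐣² = J₁J₂ and α·𝐣 = 𝐣·ρ(α) (in particular ((x⊗y)·α)·𝐣 = ((x⊗y)·𝐣)·ρ(α) and ((x⊗y)·𝐣)·𝐣 = J₁J₂·(x⊗y)); (b) for (β₁,β₂) ∈ B₁^× × B₂^×, the map λ_{β₁,β₂} : x⊗y ↦ (β₁·x)⊗(β₂·y) is a right-B-linear automorphism of M satisfying h(λ(m), λ(m')) = Nrd(β₁)·Nrd(β₂)·h(m,m') for all m, m' ∈ M, where h is the hermitian form on M with h(x⊗y, x'⊗y') = (x,x')₁·(y,y')₂; (c) the kernel of the group homomorphism B₁^× × B₂^× → GL(M), (β₁,β₂) ↦ λ_{β₁,β₂}, equals { (t, t^{-1}) : t ∈ F^× }. -/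
import Mathlib


/-- The quaternion algebra `B = E ⊕ 𝐣E` (elements written `a + 𝐣·b`) attached to the quadratic
extension `E` with conjugation `ρ` and to `J = 𝐣² ∈ E`; multiplication is determined by
`𝐣² = J` and `α·𝐣 = 𝐣·ρ(α)`.  The `E`-scalar action (componentwise) is right multiplication,
so that `Qa ρ J` is `B` regarded as a 2-dimensional right `E`-vector space with basis `1, 𝐣`. -/
def Qa {E : Type*} [Field E] (ρ : E →+* E) (J : E) : Type _ := E × E

namespace Qa

variable {E : Type*} [Field E] {ρ : E →+* E} {J : E}

instance : AddCommGroup (Qa ρ J) := inferInstanceAs (AddCommGroup (E × E))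
instance : Module E (Qa ρ J) := inferInstanceAs (Module E (E × E))

/-- The element `a + 𝐣·b` of `B`. -/
def mk' (ρ : E →+* E) (J : E) (a b : E) : Qa ρ J := (a, b)

/-- The `E`-component (the projection `pr : B → E`, relative to `B = E ⊕ E𝐣`). -/
def re (x : Qa ρ J) : E := Prod.fst x

/-- The `𝐣`-coefficient of `a + 𝐣·b`. -/
def im (x : Qa ρ J) : E := Prod.snd x

instance : One (Qa ρ J) := ⟨mk' ρ J 1 0⟩

/-- Multiplication: `(a + 𝐣b)(c + 𝐣d) = (ac + J·ρ(b)·d) + 𝐣·(ρ(a)d + bc)`. -/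
instance : Mul (Qa ρ J) :=
  ⟨fun x y => mk' ρ J (re x * re y + J * (ρ (im x) * im y)) (ρ (re x) * im y + im x * re y)⟩

/-- The main involution `(a + 𝐣b)^* = ρ(a) - 𝐣b` of `B`. -/
def conj (x : Qa ρ J) : Qa ρ J := mk' ρ J (ρ (re x)) (-im x)

/-- The element `𝐣 ∈ B`. -/
def jay (ρ : E →+* E) (J : E) : Qa ρ J := mk' ρ J 0 1

/-- The reduced norm `Nrd(x) = x·x^* = a·ρ(a) - J·ρ(b)·b ∈ E` of `x = a + 𝐣b`. -/
def nrd (x : Qa ρ J) : E := re x * ρ (re x) - J * (ρ (im x) * im x)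

/-- The hermitian form `(x, y) = pr (x^* · y)` on `B` viewed as a right `E`-space. -/
def form (x y : Qa ρ J) : E := re (conj x * y)

lemma ext' {x y : Qa ρ J} (h1 : x.re = y.re) (h2 : x.im = y.im) : x = y := Prod.ext h1 h2

@[simp] lemma re_mk' (a b : E) : (mk' ρ J a b).re = a := rfl
@[simp] lemma im_mk' (a b : E) : (mk' ρ J a b).im = b := rfl
@[simp] lemma re_add (x y : Qa ρ J) : (x + y).re = x.re + y.re := rfl
@[simp] lemma im_add (x y : Qa ρ J) : (x + y).im = x.im + y.im := rfl
@[simp] lemma re_smul (α : E) (x : Qa ρ J) : (α • x).re = α * x.re := rfl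
@[simp] lemma im_smul (α : E) (x : Qa ρ J) : (α • x).im = α * x.im := rfl
@[simp] lemma re_mul (x y : Qa ρ J) : (x * y).re = x.re * y.re + J * (ρ x.im * y.im) := rfl
@[simp] lemma im_mul (x y : Qa ρ J) : (x * y).im = ρ x.re * y.im + x.im * y.re := rfl
@[simp] lemma re_one : (1 : Qa ρ J).re = 1 := rfl
@[simp] lemma im_one : (1 : Qa ρ J).im = 0 := rfl
@[simp] lemma re_jay : (jay ρ J).re = 0 := rfl
@[simp] lemma im_jay : (jay ρ J).im = 1 := rfl

lemma one_mul' (x : Qa ρ J) : 1 * x = x := ext' (by simp) (by simp)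
lemma mul_one' (x : Qa ρ J) : x * 1 = x := ext' (by simp) (by simp)

lemma mul_assoc' (hJ : ρ J = J) (hinv : ∀ a, ρ (ρ a) = a) (x y z : Qa ρ J) :
    x * y * z = x * (y * z) :=
  ext' (by simp [map_add, map_mul, hJ, hinv]; ring) (by simp [map_add, map_mul, hJ, hinv]; ring)

lemma mul_add' (x y z : Qa ρ J) : x * (y + z) = x * y + x * z :=
  ext' (by simp; ring) (by simp; ring)

lemma mul_smul' (α : E) (x y : Qa ρ J) : x * (α • y) = α • (x * y) :=
  ext' (by simp; ring) (by simp; ring)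

/-- Left multiplication by `β` as an `E`-linear map. -/
def Lmul (β : Qa ρ J) : Qa ρ J →ₗ[E] Qa ρ J where
  toFun y := β * y
  map_add' y z := mul_add' β y z
  map_smul' α y := mul_smul' α β y

@[simp] lemma Lmul_apply (β y : Qa ρ J) : Lmul β y = β * y := rfl

lemma form_mul (hJ : ρ J = J) (hinv : ∀ a, ρ (ρ a) = a) (β x y : Qa ρ J) :
    form (β * x) (β * y) = nrd β * form x y := by
  simp [form, nrd, conj, map_add, map_mul, map_neg, hJ, hinv]; ring

lemma decompose (x : Qa ρ J) : x.re • mk' ρ J 1 0 + x.im • mk' ρ J 0 1 = x :=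
  ext' (by simp) (by simp)

lemma jay_jay (hJ : ρ J = J) (hinv : ∀ a, ρ (ρ a) = a) (x : Qa ρ J) :
    x * jay ρ J * jay ρ J = J • x :=
  ext' (by simp [hJ, hinv]) (by simp [map_add, map_mul, hJ, hinv])

def reL : Qa ρ J →ₗ[E] E where
  toFun := re
  map_add' _ _ := rfl
  map_smul' _ _ := rfl

def imL : Qa ρ J →ₗ[E] E where
  toFun := im
  map_add' _ _ := rfl
  map_smul' _ _ := rfl

@[simp] lemma reL_apply (x : Qa ρ J) : (reL : Qa ρ J →ₗ[E] E) x = x.re := rfl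
@[simp] lemma imL_apply (x : Qa ρ J) : (imL : Qa ρ J →ₗ[E] E) x = x.im := rfl

end Qa

open scoped TensorProduct

section TensorAux

variable {E : Type*} [Field E] {ρ : E →+* E} {J J' : E}

/-- Coordinate functional on the tensor product. -/
noncomputable def phi (f : Qa ρ J →ₗ[E] E) (g : Qa ρ J' →ₗ[E] E) :
    (Qa ρ J ⊗[E] Qa ρ J') →ₗ[E] E :=
  TensorProduct.lift ((LinearMap.mul E E).compl₁₂ f g)

@[simp] lemma phi_tmul (f : Qa ρ J →ₗ[E] E) (g : Qa ρ J' →ₗ[E] E)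
    (x : Qa ρ J) (y : Qa ρ J') : phi f g (x ⊗ₜ[E] y) = f x * g y := rfl

lemma reconstruct (m : Qa ρ J ⊗[E] Qa ρ J') :
    phi Qa.reL Qa.reL m • (Qa.mk' ρ J 1 0 ⊗ₜ[E] Qa.mk' ρ J' 1 0)
  + phi Qa.reL Qa.imL m • (Qa.mk' ρ J 1 0 ⊗ₜ[E] Qa.mk' ρ J' 0 1)
  + phi Qa.imL Qa.reL m • (Qa.mk' ρ J 0 1 ⊗ₜ[E] Qa.mk' ρ J' 1 0)
  + phi Qa.imL Qa.imL m • (Qa.mk' ρ J 0 1 ⊗ₜ[E] Qa.mk' ρ J' 0 1) = m := by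
  induction m using TensorProduct.induction_on with
  | zero => simp
  | tmul x y =>
      simp only [phi_tmul, Qa.reL_apply, Qa.imL_apply]
      conv_rhs => rw [← Qa.decompose x, ← Qa.decompose y]
      simp only [TensorProduct.add_tmul, TensorProduct.tmul_add, TensorProduct.tmul_smul,
        ← TensorProduct.smul_tmul', smul_smul]
      module
  | add m₁ m₂ ih₁ ih₂ =>
      simp only [map_add, add_smul]
      conv_rhs => rw [← ih₁, ← ih₂]
      abel

/-- The operator `(x⊗y)·𝐣 = (x𝐣₁)⊗(y𝐣₂)` on the tensor product, in coordinates. -/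
noncomputable def Jop0 (ρ : E →+* E) (J J' : E) :
    (Qa ρ J ⊗[E] Qa ρ J') → (Qa ρ J ⊗[E] Qa ρ J') := fun m =>
  (J * J' * ρ (phi Qa.imL Qa.imL m)) • (Qa.mk' ρ J 1 0 ⊗ₜ[E] Qa.mk' ρ J' 1 0)
  + (J * ρ (phi Qa.imL Qa.reL m)) • (Qa.mk' ρ J 1 0 ⊗ₜ[E] Qa.mk' ρ J' 0 1)
  + (J' * ρ (phi Qa.reL Qa.imL m)) • (Qa.mk' ρ J 0 1 ⊗ₜ[E] Qa.mk' ρ J' 1 0)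
  + ρ (phi Qa.reL Qa.reL m) • (Qa.mk' ρ J 0 1 ⊗ₜ[E] Qa.mk' ρ J' 0 1)

lemma Jop0_add (m m' : Qa ρ J ⊗[E] Qa ρ J') :
    Jop0 ρ J J' (m + m') = Jop0 ρ J J' m + Jop0 ρ J J' m' := by
  simp only [Jop0, map_add, mul_add, add_smul]; abel

lemma Jop0_tmul (x : Qa ρ J) (y : Qa ρ J') :
    Jop0 ρ J J' (x ⊗ₜ[E] y) = (x * Qa.jay ρ J) ⊗ₜ[E] (y * Qa.jay ρ J') := by
  conv_rhs => rw [← Qa.decompose (x * Qa.jay ρ J), ← Qa.decompose (y * Qa.jay ρ J')]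
  simp only [Jop0, phi_tmul, Qa.reL_apply, Qa.imL_apply, Qa.re_mul, Qa.im_mul,
    Qa.re_jay, Qa.im_jay, map_mul, mul_zero, mul_one, zero_mul, add_zero, zero_add,
    TensorProduct.add_tmul, TensorProduct.tmul_add, TensorProduct.tmul_smul,
    ← TensorProduct.smul_tmul', smul_smul]
  module

lemma Jop0_smul (α : E) (m : Qa ρ J ⊗[E] Qa ρ J') :
    Jop0 ρ J J' (α • m) = ρ α • Jop0 ρ J J' m := by
  simp only [Jop0, map_smul, smul_eq_mul, map_mul, smul_add, smul_smul]
  module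

lemma Jop0_jop0 (hJ : ρ J = J) (hJ' : ρ J' = J') (hinv : ∀ a, ρ (ρ a) = a)
    (m : Qa ρ J ⊗[E] Qa ρ J') :
    Jop0 ρ J J' (Jop0 ρ J J' m) = (J * J') • m := by
  induction m using TensorProduct.induction_on with
  | zero => simp [Jop0]
  | tmul x y =>
      rw [Jop0_tmul, Jop0_tmul, Qa.jay_jay hJ hinv, Qa.jay_jay hJ' hinv,
        TensorProduct.tmul_smul, ← TensorProduct.smul_tmul', smul_smul, mul_comm J' J]
  | add m₁ m₂ ih₁ ih₂ =>
      rw [Jop0_add, Jop0_add, ih₁, ih₂, smul_add]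

end TensorAux


/-- With `M = V₁ ⊗_E V₂`, where `Vᵢ = Bᵢ` is the quaternion algebra
`Bᵢ = E ⊕ E𝐣ᵢ` viewed as a right `E`-space: (a) the operator `(x⊗y)·𝐣 = (x𝐣₁)⊗(y𝐣₂)` is well
defined and makes `M` a right module over `B = E ⊕ E𝐣` with `𝐣² = J₁J₂`; (b) for units
`(β₁,β₂) ∈ B₁^× × B₂^×` the map `λ : x⊗y ↦ (β₁x)⊗(β₂y)` is a right-`B`-linear automorphism of
`M` scaling the hermitian form `h` by `Nrd(β₁)·Nrd(β₂)`; (c) the kernel of the group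
homomorphism `(β₁,β₂) ↦ λ` is `{(t, t⁻¹) : t ∈ F^×}`. -/
theorem tensor_of_quaternions
    {F E : Type*} [Field F] [CharZero F] [Field E] [Algebra F E]
    (hquad : Module.finrank F E = 2)
    (ρ : E →+* E) (hρ_invol : ∀ a, ρ (ρ a) = a) (hρ_ne : ρ ≠ RingHom.id E)
    (hρ_fixF : ∀ c : F, ρ (algebraMap F E c) = algebraMap F E c)
    (hρ_fixed_field : ∀ a : E, ρ a = a → ∃ c : F, algebraMap F E c = a)
    (i0 : E) (hi0_ne : i0 ≠ 0) (hi0_trace : ρ i0 = -i0)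
    (u : F) (hu : algebraMap F E u = i0 ^ 2)
    (J₁ J₂ : F) (hJ₁ : J₁ ≠ 0) (hJ₂ : J₂ ≠ 0) :
    -- (a)
    (∃ Jop : (Qa ρ (algebraMap F E J₁) ⊗[E] Qa ρ (algebraMap F E J₂)) →
        (Qa ρ (algebraMap F E J₁) ⊗[E] Qa ρ (algebraMap F E J₂)),
      (∀ m m', Jop (m + m') = Jop m + Jop m') ∧
      (∀ (x : Qa ρ (algebraMap F E J₁)) (y : Qa ρ (algebraMap F E J₂)),
        Jop (x ⊗ₜ[E] y) =
          (x * Qa.jay ρ (algebraMap F E J₁)) ⊗ₜ[E] (y * Qa.jay ρ (algebraMap F E J₂))) ∧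
      (∀ (α : E) m, Jop (α • m) = ρ α • Jop m) ∧
      (∀ m, Jop (Jop m) = algebraMap F E (J₁ * J₂) • m)) ∧
    -- (b)
    (∀ β₁ γ₁ : Qa ρ (algebraMap F E J₁), β₁ * γ₁ = 1 → γ₁ * β₁ = 1 →
      ∀ β₂ γ₂ : Qa ρ (algebraMap F E J₂), β₂ * γ₂ = 1 → γ₂ * β₂ = 1 →
      ∀ h : (Qa ρ (algebraMap F E J₁) ⊗[E] Qa ρ (algebraMap F E J₂)) →
          (Qa ρ (algebraMap F E J₁) ⊗[E] Qa ρ (algebraMap F E J₂)) → E,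
        (∀ m m' m'', h (m + m') m'' = h m m'' + h m' m'') →
        (∀ m m' m'', h m (m' + m'') = h m m' + h m m'') →
        (∀ (α β : E) m m', h (α • m) (β • m') = ρ α * h m m' * β) →
        (∀ (x x' : Qa ρ (algebraMap F E J₁)) (y y' : Qa ρ (algebraMap F E J₂)),
          h (x ⊗ₜ[E] y) (x' ⊗ₜ[E] y') = Qa.form x x' * Qa.form y y') →
        ∃ lam : (Qa ρ (algebraMap F E J₁) ⊗[E] Qa ρ (algebraMap F E J₂)) →ₗ[E]
            (Qa ρ (algebraMap F E J₁) ⊗[E] Qa ρ (algebraMap F E J₂)),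
          (∀ (x : Qa ρ (algebraMap F E J₁)) (y : Qa ρ (algebraMap F E J₂)),
            lam (x ⊗ₜ[E] y) = (β₁ * x) ⊗ₜ[E] (β₂ * y)) ∧
          Function.Bijective ⇑lam ∧
          (∀ Jop : (Qa ρ (algebraMap F E J₁) ⊗[E] Qa ρ (algebraMap F E J₂)) →
              (Qa ρ (algebraMap F E J₁) ⊗[E] Qa ρ (algebraMap F E J₂)),
            (∀ m m', Jop (m + m') = Jop m + Jop m') →
            (∀ (x : Qa ρ (algebraMap F E J₁)) (y : Qa ρ (algebraMap F E J₂)),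
              Jop (x ⊗ₜ[E] y) =
                (x * Qa.jay ρ (algebraMap F E J₁)) ⊗ₜ[E] (y * Qa.jay ρ (algebraMap F E J₂))) →
            ∀ m, lam (Jop m) = Jop (lam m)) ∧
          (∀ m m', h (lam m) (lam m') = Qa.nrd β₁ * Qa.nrd β₂ * h m m')) ∧
    -- (c): homomorphism property
    (∀ (β₁ β₁' : Qa ρ (algebraMap F E J₁)) (β₂ β₂' : Qa ρ (algebraMap F E J₂))
        (x : Qa ρ (algebraMap F E J₁)) (y : Qa ρ (algebraMap F E J₂)),
      ((β₁ * β₁') * x) ⊗ₜ[E] ((β₂ * β₂') * y) = (β₁ * (β₁' * x)) ⊗ₜ[E] (β₂ * (β₂' * y))) ∧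
    -- (c): kernel
    (∀ β₁ γ₁ : Qa ρ (algebraMap F E J₁), β₁ * γ₁ = 1 → γ₁ * β₁ = 1 →
      ∀ β₂ γ₂ : Qa ρ (algebraMap F E J₂), β₂ * γ₂ = 1 → γ₂ * β₂ = 1 →
      ((∀ (x : Qa ρ (algebraMap F E J₁)) (y : Qa ρ (algebraMap F E J₂)),
          (β₁ * x) ⊗ₜ[E] (β₂ * y) = x ⊗ₜ[E] y) ↔
        (∃ t : F, t ≠ 0 ∧
          β₁ = Qa.mk' ρ (algebraMap F E J₁) (algebraMap F E t) 0 ∧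
          β₂ = Qa.mk' ρ (algebraMap F E J₂) (algebraMap F E t)⁻¹ 0))) := by
  have hJ1ρ : ρ (algebraMap F E J₁) = algebraMap F E J₁ := hρ_fixF J₁
  have hJ2ρ : ρ (algebraMap F E J₂) = algebraMap F E J₂ := hρ_fixF J₂
  refine ⟨⟨Jop0 ρ _ _, Jop0_add, Jop0_tmul, Jop0_smul, fun m => ?_⟩, ?_, ?_, ?_⟩
  · rw [map_mul]; exact Jop0_jop0 hJ1ρ hJ2ρ hρ_invol m
  · -- part (b)
    intro β₁ γ₁ hbg₁ hgb₁ β₂ γ₂ hbg₂ hgb₂ h h_add1 h_add2 h_smul h_tmul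
    refine ⟨TensorProduct.map (Qa.Lmul β₁) (Qa.Lmul β₂), fun x y => rfl, ?_, ?_, ?_⟩
    · -- bijective
      have h1 : Qa.Lmul γ₁ ∘ₗ Qa.Lmul β₁ = LinearMap.id := LinearMap.ext fun x => by
        simp only [LinearMap.comp_apply, Qa.Lmul_apply, LinearMap.id_apply,
          ← Qa.mul_assoc' hJ1ρ hρ_invol, hgb₁, Qa.one_mul']
      have h2 : Qa.Lmul γ₂ ∘ₗ Qa.Lmul β₂ = LinearMap.id := LinearMap.ext fun x => by
        simp only [LinearMap.comp_apply, Qa.Lmul_apply, LinearMap.id_apply,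
          ← Qa.mul_assoc' hJ2ρ hρ_invol, hgb₂, Qa.one_mul']
      have h3 : Qa.Lmul β₁ ∘ₗ Qa.Lmul γ₁ = LinearMap.id := LinearMap.ext fun x => by
        simp only [LinearMap.comp_apply, Qa.Lmul_apply, LinearMap.id_apply,
          ← Qa.mul_assoc' hJ1ρ hρ_invol, hbg₁, Qa.one_mul']
      have h4 : Qa.Lmul β₂ ∘ₗ Qa.Lmul γ₂ = LinearMap.id := LinearMap.ext fun x => by
        simp only [LinearMap.comp_apply, Qa.Lmul_apply, LinearMap.id_apply,
          ← Qa.mul_assoc' hJ2ρ hρ_invol, hbg₂, Qa.one_mul']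
      have hli : Function.LeftInverse
          ⇑(TensorProduct.map (Qa.Lmul γ₁) (Qa.Lmul γ₂))
          ⇑(TensorProduct.map (Qa.Lmul β₁) (Qa.Lmul β₂)) := fun m => by
        rw [← LinearMap.comp_apply, ← TensorProduct.map_comp, h1, h2,
          TensorProduct.map_id, LinearMap.id_apply]
      have hri : Function.RightInverse
          ⇑(TensorProduct.map (Qa.Lmul γ₁) (Qa.Lmul γ₂))
          ⇑(TensorProduct.map (Qa.Lmul β₁) (Qa.Lmul β₂)) := fun m => by
        rw [← LinearMap.comp_apply, ← TensorProduct.map_comp, h3, h4,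
          TensorProduct.map_id, LinearMap.id_apply]
      exact ⟨hli.injective, hri.surjective⟩
    · -- commutes with Jop
      intro Jop Jadd Jtmul m
      have J0 : Jop 0 = 0 := by
        have h0 := Jadd 0 0; rw [add_zero] at h0; exact (left_eq_add.mp h0).symm ▸ rfl
      induction m using TensorProduct.induction_on with
      | zero => rw [J0, map_zero, J0]
      | tmul x y =>
          rw [Jtmul, TensorProduct.map_tmul, TensorProduct.map_tmul, Jtmul,
            Qa.Lmul_apply, Qa.Lmul_apply, Qa.Lmul_apply, Qa.Lmul_apply,
            Qa.mul_assoc' hJ1ρ hρ_invol, Qa.mul_assoc' hJ2ρ hρ_invol]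
      | add m₁ m₂ ih₁ ih₂ => rw [Jadd, map_add, ih₁, ih₂, map_add, Jadd]
    · -- form scaling
      have hz1 : ∀ m', h 0 m' = 0 := fun m' => by
        have h0 := h_add1 0 0 m'; rw [add_zero] at h0; exact (left_eq_add.mp h0)
      have hz2 : ∀ m, h m 0 = 0 := fun m => by
        have h0 := h_add2 m 0 0; rw [add_zero] at h0; exact (left_eq_add.mp h0)
      intro m
      induction m using TensorProduct.induction_on with
      | zero => intro m'; rw [map_zero, hz1, hz1, mul_zero]
      | tmul x y =>
          intro m'
          induction m' using TensorProduct.induction_on with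
          | zero => rw [map_zero, hz2, hz2, mul_zero]
          | tmul x' y' =>
              rw [TensorProduct.map_tmul, TensorProduct.map_tmul, h_tmul, h_tmul,
                Qa.Lmul_apply, Qa.Lmul_apply, Qa.Lmul_apply, Qa.Lmul_apply,
                Qa.form_mul hJ1ρ hρ_invol, Qa.form_mul hJ2ρ hρ_invol]
              ring
          | add m₁ m₂ ih₁ ih₂ => rw [map_add, h_add2, h_add2, ih₁, ih₂, mul_add]
      | add m₁ m₂ ih₁ ih₂ =>
          intro m'
          rw [map_add, h_add1, h_add1, ih₁ m', ih₂ m', mul_add]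
  · -- (c) hom
    intro β₁ β₁' β₂ β₂' x y
    rw [Qa.mul_assoc' hJ1ρ hρ_invol, Qa.mul_assoc' hJ2ρ hρ_invol]
  · -- (c) kernel
    intro β₁ γ₁ hbg₁ hgb₁ β₂ γ₂ hbg₂ hgb₂
    constructor
    · intro hyp
      have e1 := hyp 1 1
      rw [Qa.mul_one', Qa.mul_one'] at e1
      have e2 := hyp 1 (Qa.jay ρ (algebraMap F E J₂))
      rw [Qa.mul_one'] at e2
      have c00 := congrArg (fun m => phi Qa.reL Qa.reL m) e1
      have c01 := congrArg (fun m => phi Qa.reL Qa.imL m) e1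
      have c10 := congrArg (fun m => phi Qa.imL Qa.reL m) e1
      have d01 := congrArg (fun m => phi Qa.reL Qa.imL m) e2
      simp only [phi_tmul, Qa.reL_apply, Qa.imL_apply, Qa.re_one, Qa.im_one,
        Qa.re_mul, Qa.im_mul, Qa.re_jay, Qa.im_jay, mul_one, mul_zero, one_mul,
        zero_mul, add_zero, zero_add, map_zero] at c00 c01 c10 d01
      -- c00 : β₁.re * β₂.re = 1, c01 : β₁.re * β₂.im = 0, c10 : β₁.im * β₂.re = 0
      -- d01 : β₁.re * ρ β₂.re = 1
      have hre1 : Qa.re β₁ ≠ 0 := left_ne_zero_of_mul_eq_one c00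
      have hre2 : Qa.re β₂ ≠ 0 := right_ne_zero_of_mul_eq_one c00
      have him2 : Qa.im β₂ = 0 := (mul_eq_zero.mp c01).resolve_left hre1
      have him1 : Qa.im β₁ = 0 := (mul_eq_zero.mp c10).resolve_right hre2
      have hfix : ρ (Qa.re β₂) = Qa.re β₂ := mul_left_cancel₀ hre1 (d01.trans c00.symm)
      obtain ⟨c, hc⟩ := hρ_fixed_field _ hfix
      have hc0 : c ≠ 0 := fun h0 => hre2 (by rw [← hc, h0, map_zero])
      refine ⟨c⁻¹, inv_ne_zero hc0, ?_, ?_⟩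
      · refine Qa.ext' ?_ him1
        rw [Qa.re_mk', map_inv₀, hc]
        exact eq_inv_of_mul_eq_one_left c00
      · refine Qa.ext' ?_ him2
        rw [Qa.re_mk', map_inv₀, inv_inv, hc]
    · rintro ⟨t, ht, hb1, hb2⟩ x y
      have htE : algebraMap F E t ≠ 0 := fun H =>
        ht ((algebraMap F E).injective (by rw [H, map_zero]))
      have l1 : β₁ * x = algebraMap F E t • x := by
        rw [hb1]; exact Qa.ext' (by simp) (by simp [hρ_fixF])
      have l2 : β₂ * y = (algebraMap F E t)⁻¹ • y := by
        rw [hb2]; exact Qa.ext' (by simp) (by simp [map_inv₀, hρ_fixF])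
      rw [l1, l2, TensorProduct.tmul_smul, ← TensorProduct.smul_tmul', smul_smul,
        inv_mul_cancel₀ htE, one_smul]
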